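/- arXiv:1307.7624 — 4 statements merged into one kernel-verified Lean document; each statement's English description precedes it below -/
import Mathlib

section
/- Let D be a separable metric space, F a normal topological space, D' a dense subset of D, and Φ : D' → F continuous. Let S be the set of points x ∈ D at which the limit of Φ(x') as x' → x through D' fails to exist. Then S has empty interior in D. -/
open Topology Filter

/-- Let D be a separable metric space, F a normal topological space,
D' a dense subset of D, and Φ : D' → F continuous. Let S be the set of points x ∈ D
at which the limit of Φ(x') as x' → x through D' fails to exist. Then S has empty
interior in D. -/
theorem singular_set_empty_interior
    {D F : Type*} [MetricSpace D] [TopologicalSpace.SeparableSpace D]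
    [TopologicalSpace F] [T4Space F]
    (D' : Set D) (hdense : Dense D') (Φ : D → F) (hΦ : ContinuousOn Φ D') :
    interior {x : D | ¬ ∃ y : F, Tendsto Φ (𝓝[D'] x) (𝓝 y)} = ∅ := by
  have hsub : {x : D | ¬ ∃ y : F, Tendsto Φ (𝓝[D'] x) (𝓝 y)} ⊆ D'ᶜ := by
    intro x hx hxD'
    exact hx ⟨Φ x, hΦ x hxD'⟩
  have := interior_mono hsub
  rwa [interior_compl, hdense.closure_eq, Set.compl_univ,
    Set.subset_empty_iff] at this
end

section
/- Let D be a separable metric space, F a normal topological space, D' ⊆ D dense, and Φ : D' → F continuous. Let S be the singular set of Φ (points where the limit through D' does not exist). Define Φ' on D \ S by Φ'(x) = Φ(x) if x is an isolated point of D (necessarily in D'), and Φ'(x) = lim_{x'→x, x'∈D'} Φ(x') otherwise. Then Φ' is continuous on D \ S, and the singular set of Φ' with respect to the dense set D \ S is exactly S. -/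
open Topology Filter Set

/-- With D separable metric, F normal, D' ⊆ D dense, Φ : D' → F
continuous, and S the singular set of Φ, the extension Φ' of Φ to D \ S (agreeing
with Φ at isolated points and given by the limit elsewhere) is continuous on
D \ S, and the singular set of Φ' with respect to D \ S is exactly S. -/
theorem extension_continuous_and_same_singular_set
    {D F : Type*} [MetricSpace D] [TopologicalSpace.SeparableSpace D]
    [TopologicalSpace F] [T4Space F]
    (D' : Set D) (hdense : Dense D') (Φ : D → F) (hΦ : ContinuousOn Φ D')
    (S : Set D) (hS : S = {x : D | ¬ ∃ y : F, Tendsto Φ (𝓝[D'] x) (𝓝 y)})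
    (Φ' : D → F)
    (hiso : ∀ x : D, 𝓝[≠] x = ⊥ → Φ' x = Φ x)
    (hlim : ∀ x ∉ S, ¬ (𝓝[≠] x = ⊥) → Tendsto Φ (𝓝[D'] x) (𝓝 (Φ' x))) :
    ContinuousOn Φ' Sᶜ ∧
      {x : D | ¬ ∃ y : F, Tendsto Φ' (𝓝[Sᶜ] x) (𝓝 y)} = S := by
  have hDne : ∀ x : D, (𝓝[D'] x).NeBot := fun x =>
    mem_closure_iff_nhdsWithin_neBot.1 (hdense x)
  -- key: Φ tends to Φ' x along 𝓝[D'] x for any x ∉ S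
  have hkey : ∀ x ∉ S, Tendsto Φ (𝓝[D'] x) (𝓝 (Φ' x)) := by
    intro x hx
    by_cases hi : 𝓝[≠] x = ⊥
    · rw [hiso x hi]
      have hpure : 𝓝 x = pure x := by
        rw [← nhdsNE_sup_pure x, hi, bot_sup_eq]
      have h1 : 𝓝[D'] x ≤ pure x := le_trans nhdsWithin_le_nhds hpure.le
      exact (tendsto_pure_nhds Φ x).mono_left h1
    · exact hlim x hx hi
  have hcont : ContinuousOn Φ' Sᶜ := by
    intro x hx
    rw [ContinuousWithinAt, (closed_nhds_basis (Φ' x)).tendsto_right_iff]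
    rintro C ⟨hC, hCcl⟩
    have h1 : Φ ⁻¹' C ∈ 𝓝[D'] x := hkey x hx hC
    rcases mem_nhdsWithin.1 h1 with ⟨U, hUopen, hxU, hU⟩
    filter_upwards [nhdsWithin_le_nhds (hUopen.mem_nhds hxU), self_mem_nhdsWithin]
      with x' hx'U hx'S
    haveI := hDne x'
    refine hCcl.mem_of_tendsto (hkey x' hx'S) ?_
    filter_upwards [mem_nhdsWithin_of_mem_nhds (hUopen.mem_nhds hx'U),
      self_mem_nhdsWithin] with z hz1 hz2
    exact hU ⟨hz1, hz2⟩
  have hD'S : D' ⊆ Sᶜ := by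
    intro x' hx'
    simp only [hS, mem_compl_iff, mem_setOf_eq, not_not]
    exact ⟨Φ x', hΦ x' hx'⟩
  have hΦ'eq : ∀ x' ∈ D', Φ' x' = Φ x' := by
    intro x' hx'
    haveI := hDne x'
    exact tendsto_nhds_unique (hkey x' (hD'S hx')) (hΦ x' hx')
  refine ⟨hcont, ?_⟩
  ext x
  simp only [mem_setOf_eq]
  constructor
  · intro h
    by_contra hxS
    exact h ⟨Φ' x, hcont x hxS⟩
  · rintro hxS ⟨y, hy⟩
    have hxS' : ¬ ∃ y : F, Tendsto Φ (𝓝[D'] x) (𝓝 y) := by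
      rw [hS] at hxS; exact hxS
    refine hxS' ⟨y, ?_⟩
    have h1 : Tendsto Φ' (𝓝[D'] x) (𝓝 y) :=
      hy.mono_left (nhdsWithin_mono x hD'S)
    have h2 : Φ' =ᶠ[𝓝[D'] x] Φ :=
      eventually_of_mem self_mem_nhdsWithin (fun z hz => hΦ'eq z hz)
    exact Tendsto.congr' h2 h1
end

section
/- Let D be a separable metric space, F a normal space, and g : F × D → ℝ any function. Let D₂ be the set of points x' ∈ D for which there exists f₀ ∈ F such that for every neighborhood G of f₀ there is a neighborhood U of x' with inf_{f∉G} g(f,x) > g(f₀,x) for all x ∈ U. Then for each x' ∈ D₂ the function f ↦ g(f,x') has a unique minimizer Φ(x') = f₀, and the resulting map Φ : D₂ → F is continuous. -/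
open Topology Filter

/-- D separable metric, F normal, g : F × D → ℝ arbitrary.  D₂ is the
set of x' for which there is f₀ ∈ F such that for every neighborhood G of f₀ there
is a neighborhood U of x' with inf_{f ∉ G} g(f,x) > g(f₀,x) for all x ∈ U.
Then at each x' ∈ D₂ the function f ↦ g(f,x') has a unique minimizer, and any
selection Φ of these minimizers is continuous on D₂. -/
theorem uniform_argmin_unique_and_continuous
    {D F : Type*} [MetricSpace D] [TopologicalSpace.SeparableSpace D]
    [TopologicalSpace F] [T4Space F]
    (g : F → D → ℝ)
    (D₂ : Set D)
    (hD₂ : ∀ x' : D, x' ∈ D₂ ↔ ∃ f₀ : F, ∀ G ∈ 𝓝 f₀, ∃ U ∈ 𝓝 x',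
      ∀ x ∈ U, ∃ c : ℝ, g f₀ x < c ∧ ∀ f ∉ G, c ≤ g f x) :
    (∀ x' ∈ D₂, ∃! f₀ : F, ∀ f : F, g f₀ x' ≤ g f x') ∧
    (∀ Φ : D → F, (∀ x' ∈ D₂, ∀ f : F, g (Φ x') x' ≤ g f x') →
      ContinuousOn Φ D₂) := by
  have key : ∀ x' ∈ D₂, ∃ f₀ : F,
      (∀ f : F, f ≠ f₀ → g f₀ x' < g f x') ∧
      (∀ G ∈ 𝓝 f₀, ∃ U ∈ 𝓝 x', ∀ x ∈ U, ∃ c : ℝ, g f₀ x < c ∧ ∀ f ∉ G, c ≤ g f x) := by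
    intro x' hx'
    obtain ⟨f₀, hf₀⟩ := (hD₂ x').1 hx'
    refine ⟨f₀, ?_, hf₀⟩
    intro f hf
    have hG : ({f}ᶜ : Set F) ∈ 𝓝 f₀ :=
      isOpen_compl_singleton.mem_nhds (by simpa using hf.symm)
    obtain ⟨U, hU, hU'⟩ := hf₀ _ hG
    obtain ⟨c, hc1, hc2⟩ := hU' x' (mem_of_mem_nhds hU)
    exact hc1.trans_le (hc2 f (by simp))
  constructor
  · intro x' hx'
    obtain ⟨f₀, hstrict, -⟩ := key x' hx'
    refine ⟨f₀, ?_, ?_⟩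
    · intro f
      rcases eq_or_ne f f₀ with rfl | h
      · exact le_rfl
      · exact (hstrict f h).le
    · intro f₁ hf₁
      by_contra h
      exact absurd (hf₁ f₀) (not_le.2 (hstrict f₁ h))
  · intro Φ hΦ x' hx'
    obtain ⟨f₀, hstrict, hnbhd⟩ := key x' hx'
    have hΦx' : Φ x' = f₀ := by
      by_contra h
      exact absurd (hΦ x' hx' f₀) (not_le.2 (hstrict _ h))
    rw [ContinuousWithinAt, hΦx', tendsto_def]
    intro G hG
    obtain ⟨U, hU, hU'⟩ := hnbhd G hG
    filter_upwards [mem_nhdsWithin_of_mem_nhds hU, self_mem_nhdsWithin] with x hxU hxD₂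
    obtain ⟨c, hc1, hc2⟩ := hU' x hxU
    by_contra hxG
    exact absurd (hΦ x hxD₂ f₀) (not_le.2 (hc1.trans_le (hc2 _ hxG)))
end

section
/- Let X be a second-countable locally compact space with two metrics ρ₁, ρ₂ generating its topology, such that the identity (X,ρ₁) → (X,ρ₂) is locally Lipschitz. Then for each s ≥ 0 there is a locally bounded Borel function M : X → [0,∞) such that H₂^s(A) ≤ ∫_A M dH₁^s for every H^s-measurable set A, where H_i^s denotes s-dimensional Hausdorff measure with respect to ρ_i. -/
/-! Since `X₁` is Lindelöf, countably many open sets `U n` cover it, with `e` being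
`K n`-Lipschitz on `U n`. Disjointifying them into `D n` and setting `M = K n ^ s` on `D n`,
we get `μH[s] (e '' (A ∩ D n)) ≤ K n ^ s * μH[s] (A ∩ D n)`, and summing over `n` gives the
bound. On `U n` the function `M` takes only the finitely many values `K m ^ s`, `m ≤ n`. -/

open MeasureTheory Topology ENNReal Set
open scoped NNReal

theorem LocallyLipschitz.exists_lipschitzOnWith_open_cover {X Y : Type*}
    [PseudoEMetricSpace X] [LindelofSpace X] [PseudoEMetricSpace Y] {f : X → Y}
    (hf : LocallyLipschitz f) :
    ∃ (K : ℕ → ℝ≥0) (U : ℕ → Set X), (∀ n, IsOpen (U n)) ∧ ⋃ n, U n = univ ∧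
      ∀ n, LipschitzOnWith (K n) f (U n) := by
  rcases isEmpty_or_nonempty X with hX | hX
  · exact ⟨0, fun _ => ∅, fun _ => isOpen_empty, eq_univ_of_forall isEmptyElim,
      fun _ => lipschitzOnWith_empty _ _⟩
  choose K V hV hKV using hf
  obtain ⟨t, htc, htU⟩ := countable_cover_nhds_interior hV
  obtain ⟨g, rfl⟩ := htc.exists_eq_range <| by
    obtain ⟨y, hy, -⟩ := mem_iUnion₂.1 (htU ▸ mem_univ hX.some)
    exact ⟨y, hy⟩
  refine ⟨K ∘ g, fun n => interior (V (g n)), fun n => isOpen_interior, ?_,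
    fun n => (hKV (g n)).mono interior_subset⟩
  simpa using htU

section
variable {X : Type*} (U : ℕ → Set X) (c : ℕ → ℝ≥0∞)

noncomputable def disjointedStep (x : X) : ℝ≥0∞ :=
  ∑' n, (disjointed U n).indicator (fun _ => c n) x

variable {U c}

theorem exists_le_mem_disjointed_of_mem {x : X} {n : ℕ} (hx : x ∈ U n) :
    ∃ m ≤ n, x ∈ disjointed U m := by
  have : x ∈ ⋃ m ∈ Finset.Iic n, disjointed U m := by
    rw [biUnion_Iic_disjointed]; exact le_partialSups U n hx
  simpa using this

theorem disjointedStep_of_mem {x : X} {n : ℕ} (hx : x ∈ disjointed U n) :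
    disjointedStep U c x = c n := by
  rw [disjointedStep, tsum_eq_single n fun m hmn =>
    indicator_of_notMem ((disjoint_disjointed U hmn).notMem_of_mem_right hx) _]
  exact indicator_of_mem hx _

theorem disjointedStep_le_of_mem {x : X} {n : ℕ} (hx : x ∈ U n) :
    disjointedStep U c x ≤ ∑ m ∈ Finset.Iic n, c m := by
  obtain ⟨m, hmn, hm⟩ := exists_le_mem_disjointed_of_mem hx
  rw [disjointedStep_of_mem hm]
  exact Finset.single_le_sum (fun _ _ => zero_le) (Finset.mem_Iic.2 hmn)

variable [MeasurableSpace X]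

theorem measurable_disjointedStep (hU : ∀ n, MeasurableSet (U n)) :
    Measurable (disjointedStep U c) :=
  .tsum fun n => measurable_const.indicator (.disjointed hU n)

theorem setLIntegral_disjointedStep (hU : ∀ n, MeasurableSet (U n)) (μ : Measure X)
    (A : Set X) :
    ∫⁻ x in A, disjointedStep U c x ∂μ = ∑' n, c n * μ (A ∩ disjointed U n) := by
  simp_rw [disjointedStep]
  rw [lintegral_tsum fun n => (measurable_const.indicator (.disjointed hU n)).aemeasurable]
  congr 1 with n
  rw [lintegral_indicator_const (.disjointed hU n), Measure.restrict_apply (.disjointed hU n),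
    inter_comm]

end

theorem hausdorffMeasure_image_le_setLIntegral_disjointedStep {X Y : Type*}
    [EMetricSpace X] [MeasurableSpace X] [BorelSpace X]
    [EMetricSpace Y] [MeasurableSpace Y] [BorelSpace Y]
    {f : X → Y} {K : ℕ → ℝ≥0} {U : ℕ → Set X} (hU : ∀ n, MeasurableSet (U n))
    (hcover : ⋃ n, U n = univ) (hf : ∀ n, LipschitzOnWith (K n) f (U n))
    {d : ℝ} (hd : 0 ≤ d) (A : Set X) :
    μH[d] (f '' A) ≤ ∫⁻ x in A, disjointedStep U (fun n => (K n : ℝ≥0∞) ^ d) x ∂μH[d] := by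
  have hA : A = ⋃ n, A ∩ disjointed U n := by
    rw [← inter_iUnion, iUnion_disjointed, hcover, inter_univ]
  calc μH[d] (f '' A) = μH[d] (⋃ n, f '' (A ∩ disjointed U n)) := by
        rw [← image_iUnion, ← hA]
    _ ≤ ∑' n, μH[d] (f '' (A ∩ disjointed U n)) := measure_iUnion_le _
    _ ≤ ∑' n, (K n : ℝ≥0∞) ^ d * μH[d] (A ∩ disjointed U n) :=
        ENNReal.tsum_le_tsum fun n => ((hf n).mono
          (inter_subset_right.trans (disjointed_subset U n))).hausdorffMeasure_image_le hd
    _ = _ := (setLIntegral_disjointedStep hU _ A).symm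

theorem hausdorff_measure_comparison_of_locallyLipschitz_id_general
    {X₁ X₂ : Type*} [MetricSpace X₁] [SecondCountableTopology X₁]
    [MetricSpace X₂]
    [MeasurableSpace X₁] [BorelSpace X₁] [MeasurableSpace X₂] [BorelSpace X₂]
    (e : X₁ ≃ₜ X₂) (he : LocallyLipschitz e) (s : ℝ) (hs : 0 ≤ s) :
    ∃ M : X₁ → ℝ≥0∞, Measurable M ∧ (∀ x, M x ≠ ⊤) ∧
      (∀ x : X₁, ∃ U ∈ 𝓝 x, ∃ C : ℝ≥0∞, C ≠ ⊤ ∧ ∀ y ∈ U, M y ≤ C) ∧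
      ∀ A : Set X₁, MeasurableSet A →
        μH[s] (e '' A) ≤ ∫⁻ x in A, M x ∂(μH[s]) := by
  obtain ⟨K, U, hU, hcover, hK⟩ := he.exists_lipschitzOnWith_open_cover
  set c : ℕ → ℝ≥0∞ := fun n => (K n : ℝ≥0∞) ^ s
  have hc : ∀ n, c n ≠ ⊤ := fun n => rpow_ne_top_of_nonneg hs coe_ne_top
  have hbound : ∀ x, ∃ n, U n ∈ 𝓝 x ∧ ∑ m ∈ Finset.Iic n, c m ≠ ⊤ ∧
      ∀ y ∈ U n, disjointedStep U c y ≤ ∑ m ∈ Finset.Iic n, c m := fun x => by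
    obtain ⟨n, hn⟩ := mem_iUnion.1 (hcover ▸ mem_univ x)
    exact ⟨n, (hU n).mem_nhds hn, sum_ne_top.2 fun m _ => hc m,
      fun y => disjointedStep_le_of_mem⟩
  refine ⟨disjointedStep U c, measurable_disjointedStep fun n => (hU n).measurableSet,
    fun x => ?_, fun x => ?_, fun A _ =>
    hausdorffMeasure_image_le_setLIntegral_disjointedStep (fun n => (hU n).measurableSet)
      hcover hK hs A⟩
  · obtain ⟨n, hn, hfin, hle⟩ := hbound x
    exact ne_top_of_le_ne_top hfin (hle x (mem_of_mem_nhds hn))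
  · obtain ⟨n, hn, hfin, hle⟩ := hbound x
    exact ⟨U n, hn, _, hfin, hle⟩

/-- Let X carry two metrics ρ₁, ρ₂ generating the same
(second-countable, locally compact) topology — modeled here by metric spaces X₁,
X₂ identified by a homeomorphism e — such that the identity (X,ρ₁) → (X,ρ₂) is
locally Lipschitz.  Then for each s ≥ 0 there is a finite-valued, locally
bounded, Borel function M such that H₂^s(A) ≤ ∫_A M dH₁^s for every measurable
set A. -/
theorem hausdorff_measure_comparison_of_locallyLipschitz_id
    {X₁ X₂ : Type*} [MetricSpace X₁] [SecondCountableTopology X₁]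
    [LocallyCompactSpace X₁] [MetricSpace X₂]
    [MeasurableSpace X₁] [BorelSpace X₁] [MeasurableSpace X₂] [BorelSpace X₂]
    (e : X₁ ≃ₜ X₂) (he : LocallyLipschitz e) (s : ℝ) (hs : 0 ≤ s) :
    ∃ M : X₁ → ℝ≥0∞, Measurable M ∧ (∀ x, M x ≠ ⊤) ∧
      (∀ x : X₁, ∃ U ∈ 𝓝 x, ∃ C : ℝ≥0∞, C ≠ ⊤ ∧ ∀ y ∈ U, M y ≤ C) ∧
      ∀ A : Set X₁, MeasurableSet A →
        μH[s] (e '' A) ≤ ∫⁻ x in A, M x ∂(μH[s]) :=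
  hausdorff_measure_comparison_of_locallyLipschitz_id_general e he s hs
end
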